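/- arXiv:2511.13690 — 2 statements merged into one kernel-verified Lean document; each statement's English description precedes it below -/
import Mathlib

section
/- Ramanujan norm is dominated by the ℓ² norm: if x ∈ ℓ²(ℤ) and the limit ⟨x,x⟩_R = lim_{Q→∞} (1/Q) Σ_{q=1}^{Q} (1/q) Σ_{r=0}^{q-1} c_q(r) Σ_{n ≡ r mod q} |x_n|² exists, then ⟨x,x⟩_R ≤ ‖x‖_{ℓ²}². -/
open Finset

noncomputable def ramanujanSum (q : ℕ) (n : ℤ) : ℂ :=
  ∑ k ∈ (Finset.Icc 1 q).filter (fun k => Nat.gcd k q = 1),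
    Complex.exp (2 * Real.pi * Complex.I * (k : ℂ) * (n : ℂ) / (q : ℂ))

lemma ramanujanSum_re_le (q : ℕ) (n : ℤ) : (ramanujanSum q n).re ≤ q := by
  unfold ramanujanSum
  rw [Complex.re_sum]
  calc ∑ k ∈ (Finset.Icc 1 q).filter (fun k => Nat.gcd k q = 1),
        (Complex.exp (2 * Real.pi * Complex.I * (k : ℂ) * (n : ℂ) / (q : ℂ))).re
      ≤ ∑ _k ∈ (Finset.Icc 1 q).filter (fun k => Nat.gcd k q = 1), (1 : ℝ) := by
        refine Finset.sum_le_sum fun k _ => ?_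
        have h : 2 * (Real.pi : ℂ) * Complex.I * (k : ℂ) * (n : ℂ) / (q : ℂ)
            = ((2 * Real.pi * k * n / q : ℝ) : ℂ) * Complex.I := by
          push_cast; ring
        rw [h, Complex.exp_ofReal_mul_I_re]
        exact Real.cos_le_one _
    _ ≤ q := by
        rw [Finset.sum_const, nsmul_eq_mul, mul_one]
        have := Finset.card_filter_le (Finset.Icc 1 q) (fun k => Nat.gcd k q = 1)
        have h2 : (Finset.Icc 1 q).card = q := by
          rw [Nat.card_Icc]; omega
        exact_mod_cast h2 ▸ this

theorem ramanujanNorm_le_l2 (x : ℤ → ℝ)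
    (hx : Summable fun n : ℤ => (x n) ^ 2) (L : ℝ)
    (hL : Filter.Tendsto
      (fun Q : ℕ => (1 / (Q : ℝ)) * ∑ q ∈ Finset.Icc 1 Q,
        (1 / (q : ℝ)) * ∑ r ∈ Finset.range q,
          (ramanujanSum q (r : ℤ)).re *
            ∑' n : {n : ℤ // n % (q : ℤ) = (r : ℤ)}, (x n) ^ 2)
      Filter.atTop (nhds L)) :
    L ≤ ∑' n : ℤ, (x n) ^ 2 := by
  set S := ∑' n : ℤ, (x n) ^ 2 with hSdef
  have hS0 : 0 ≤ S := tsum_nonneg fun n => sq_nonneg _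
  have hT0 : ∀ (q : ℕ) (r : ℕ),
      0 ≤ ∑' n : {n : ℤ // n % (q : ℤ) = (r : ℤ)}, (x n) ^ 2 :=
    fun q r => tsum_nonneg fun n => sq_nonneg _
  -- partition fact
  have key : ∀ q : ℕ, 1 ≤ q →
      ∑ r ∈ Finset.range q, ∑' n : {n : ℤ // n % (q : ℤ) = (r : ℤ)}, (x n) ^ 2 = S := by
    intro q hq
    have hsummand : ∀ r : ℕ,
        Summable (Set.indicator {n : ℤ | n % (q : ℤ) = (r : ℤ)} (fun n => (x n) ^ 2)) :=
      fun r => hx.indicator _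
    have h1 : ∀ r : ℕ,
        (∑' n : {n : ℤ // n % (q : ℤ) = (r : ℤ)}, (x n) ^ 2)
          = ∑' n : ℤ, Set.indicator {n : ℤ | n % (q : ℤ) = (r : ℤ)} (fun n => (x n) ^ 2) n :=
      fun r => by exact _root_.tsum_subtype {n : ℤ | n % (q : ℤ) = (r : ℤ)} (fun n => (x n) ^ 2)
    calc ∑ r ∈ Finset.range q, ∑' n : {n : ℤ // n % (q : ℤ) = (r : ℤ)}, (x n) ^ 2
        = ∑ r ∈ Finset.range q,
            ∑' n : ℤ, Set.indicator {n : ℤ | n % (q : ℤ) = (r : ℤ)} (fun n => (x n) ^ 2) n := by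
          exact Finset.sum_congr rfl fun r _ => h1 r
      _ = ∑' n : ℤ, ∑ r ∈ Finset.range q,
            Set.indicator {n : ℤ | n % (q : ℤ) = (r : ℤ)} (fun n => (x n) ^ 2) n :=
          (Summable.tsum_finsetSum fun r _ => hsummand r).symm
      _ = S := by
          refine tsum_congr fun n => ?_
          have hqpos : (0 : ℤ) < (q : ℤ) := by exact_mod_cast hq
          have hmod0 : 0 ≤ n % (q : ℤ) := Int.emod_nonneg n (ne_of_gt hqpos)
          have hmodlt : n % (q : ℤ) < (q : ℤ) := Int.emod_lt_of_pos n hqpos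
          set r0 : ℕ := (n % (q : ℤ)).toNat with hr0
          have hr0cast : (r0 : ℤ) = n % (q : ℤ) := Int.toNat_of_nonneg hmod0
          have hr0mem : r0 ∈ Finset.range q := by
            rw [Finset.mem_range]
            omega
          rw [Finset.sum_eq_single_of_mem r0 hr0mem]
          · simp [Set.indicator_apply, hr0cast.symm]
          · intro r _ hr
            apply Set.indicator_of_notMem
            simp only [Set.mem_setOf_eq]
            intro hcontra
            apply hr
            omega
  -- each q-term is ≤ S
  have hterm : ∀ q : ℕ, 1 ≤ q →
      (1 / (q : ℝ)) * ∑ r ∈ Finset.range q,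
        (ramanujanSum q (r : ℤ)).re *
          ∑' n : {n : ℤ // n % (q : ℤ) = (r : ℤ)}, (x n) ^ 2 ≤ S := by
    intro q hq
    have hqR : (0 : ℝ) < (q : ℝ) := by exact_mod_cast hq
    have hsum : ∑ r ∈ Finset.range q,
        (ramanujanSum q (r : ℤ)).re *
          ∑' n : {n : ℤ // n % (q : ℤ) = (r : ℤ)}, (x n) ^ 2
        ≤ (q : ℝ) * S := by
      calc ∑ r ∈ Finset.range q,
            (ramanujanSum q (r : ℤ)).re *
              ∑' n : {n : ℤ // n % (q : ℤ) = (r : ℤ)}, (x n) ^ 2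
          ≤ ∑ r ∈ Finset.range q,
            (q : ℝ) * ∑' n : {n : ℤ // n % (q : ℤ) = (r : ℤ)}, (x n) ^ 2 :=
            Finset.sum_le_sum fun r _ =>
              mul_le_mul_of_nonneg_right (ramanujanSum_re_le q r) (hT0 q r)
        _ = (q : ℝ) * S := by rw [← Finset.mul_sum, key q hq]
    calc (1 / (q : ℝ)) * ∑ r ∈ Finset.range q,
          (ramanujanSum q (r : ℤ)).re *
            ∑' n : {n : ℤ // n % (q : ℤ) = (r : ℤ)}, (x n) ^ 2
        ≤ (1 / (q : ℝ)) * ((q : ℝ) * S) :=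
          mul_le_mul_of_nonneg_left hsum (by positivity)
      _ = S := by field_simp
  -- average ≤ S for Q ≥ 1
  have hA : ∀ Q : ℕ, 1 ≤ Q →
      (1 / (Q : ℝ)) * ∑ q ∈ Finset.Icc 1 Q,
        (1 / (q : ℝ)) * ∑ r ∈ Finset.range q,
          (ramanujanSum q (r : ℤ)).re *
            ∑' n : {n : ℤ // n % (q : ℤ) = (r : ℤ)}, (x n) ^ 2 ≤ S := by
    intro Q hQ
    have hQR : (0 : ℝ) < (Q : ℝ) := by exact_mod_cast hQ
    have hsum : ∑ q ∈ Finset.Icc 1 Q,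
        (1 / (q : ℝ)) * ∑ r ∈ Finset.range q,
          (ramanujanSum q (r : ℤ)).re *
            ∑' n : {n : ℤ // n % (q : ℤ) = (r : ℤ)}, (x n) ^ 2 ≤ (Q : ℝ) * S := by
      calc ∑ q ∈ Finset.Icc 1 Q,
            (1 / (q : ℝ)) * ∑ r ∈ Finset.range q,
              (ramanujanSum q (r : ℤ)).re *
                ∑' n : {n : ℤ // n % (q : ℤ) = (r : ℤ)}, (x n) ^ 2
          ≤ ∑ _q ∈ Finset.Icc 1 Q, S :=
            Finset.sum_le_sum fun q hqmem =>
              hterm q (Finset.mem_Icc.mp hqmem).1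
        _ = (Q : ℝ) * S := by
            rw [Finset.sum_const, nsmul_eq_mul, Nat.card_Icc]
            norm_num
    calc (1 / (Q : ℝ)) * ∑ q ∈ Finset.Icc 1 Q,
          (1 / (q : ℝ)) * ∑ r ∈ Finset.range q,
            (ramanujanSum q (r : ℤ)).re *
              ∑' n : {n : ℤ // n % (q : ℤ) = (r : ℤ)}, (x n) ^ 2
        ≤ (1 / (Q : ℝ)) * ((Q : ℝ) * S) :=
          mul_le_mul_of_nonneg_left hsum (by positivity)
      _ = S := by field_simp
  exact le_of_tendsto hL (Filter.eventually_atTop.mpr ⟨1, hA⟩)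
end

section
/- Perturbed small-gain lemma (robustness under arithmetic disturbances): let (v_k) be nonnegative reals, α₀ ≥ 0, W ≥ 0, and g : ℕ → ℝ_{≥0} with G := Σ_{n=1}^{∞} g(n) < 1. If v_k ≤ α₀ + Σ_{j=0}^{k−1} g(k−j) v_j + Σ_{j=0}^{k−1} g(k−j) W for all k ≥ 0, then sup_{k≥0} v_k ≤ (α₀ + G·W)/(1−G). -/
theorem perturbed_small_gain (v : ℕ → ℝ) (hv : ∀ k, 0 ≤ v k)
    (α₀ W : ℝ) (hα₀ : 0 ≤ α₀) (hW : 0 ≤ W)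
    (g : ℕ → ℝ) (hg : ∀ n, 0 ≤ g n)
    (hgsum : Summable fun n : ℕ => g (n + 1))
    (hG : (∑' n : ℕ, g (n + 1)) < 1)
    (hrec : ∀ k : ℕ, v k ≤ α₀ + ∑ j ∈ Finset.range k, g (k - j) * v j
        + ∑ j ∈ Finset.range k, g (k - j) * W) :
    ∀ k : ℕ, v k ≤ (α₀ + (∑' n : ℕ, g (n + 1)) * W) / (1 - ∑' n : ℕ, g (n + 1)) := by
  set G : ℝ := ∑' n : ℕ, g (n + 1) with hGdef
  have hG0 : 0 ≤ G := tsum_nonneg fun n => hg _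
  have h1G : 0 < 1 - G := by linarith
  set B : ℝ := (α₀ + G * W) / (1 - G) with hBdef
  have hB0 : 0 ≤ B := div_nonneg (by nlinarith) (le_of_lt h1G)
  have hpart : ∀ k : ℕ, (∑ j ∈ Finset.range k, g (k - j)) ≤ G := by
    intro k
    have h1 : (∑ j ∈ Finset.range k, g (k - j))
        = ∑ j ∈ Finset.range k, g (j + 1) := by
      rw [← Finset.sum_range_reflect (fun j => g (j + 1)) k]
      apply Finset.sum_congr rfl
      intro j hj
      rw [Finset.mem_range] at hj
      congr 1
      omega
    rw [h1]
    exact Summable.sum_le_tsum (Finset.range k) (fun i _ => hg _) hgsum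
  intro k
  induction k using Nat.strong_induction_on with
  | _ k ih =>
    have h1 : v k ≤ α₀ + (∑ j ∈ Finset.range k, g (k - j)) * (B + W) := by
      refine le_trans (hrec k) ?_
      simp only [mul_add, Finset.sum_add_distrib, Finset.sum_mul]
      have hsum1 : (∑ j ∈ Finset.range k, g (k - j) * v j)
          ≤ ∑ j ∈ Finset.range k, g (k - j) * B := by
        apply Finset.sum_le_sum
        intro j hj
        rw [Finset.mem_range] at hj
        exact mul_le_mul_of_nonneg_left (ih j hj) (hg _)
      rw [← Finset.sum_mul]
      linarith
    have h2 : (∑ j ∈ Finset.range k, g (k - j)) * (B + W) ≤ G * (B + W) :=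
      mul_le_mul_of_nonneg_right (hpart k) (by linarith)
    have hBeq : α₀ + G * (B + W) = B := by
      rw [hBdef]
      field_simp [h1G.ne']
      ring
    linarith
end
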